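/- arXiv:math/0507142 — 2 statements merged into one kernel-verified Lean document; each statement's English description precedes it below -/
import Mathlib

section
/- In the stick percolation model, suppose the stick length distribution μ has a heavy tail of exponent 1/2: there exist c > 0 and x₀ ≥ 0 such that R(x) = μ((x,∞)) ≥ c x^{−1/2} for all x ≥ x₀. Then the distribution is cluster-stable: for every intensity λ > 0 the system percolates with probability 1, i.e. P(E) = 1. -/
/-!
Compare the seeds with the scale `n ^ (3/2)`. The seed `x n` exceeds it only if one of the
first `n + 1` spacings exceeds `√n / 2`, which has probability at most `(n + 1) e^(-λ √n / 2)`;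
all of the first `n` sticks are shorter than `n ^ (3/2)` with probability
`(1 - R(n ^ (3/2))) ^ n ≤ e^(-c n ^ (1/4))`, and this is where the tail exponent `1/2` enters.
Both bounds are summable, so by Borel–Cantelli, almost surely for every large `n` some stick
started before `x n` reaches past `n ^ (3/2) ≥ x n`. Sticks overlapping in this way cover a
half-line.
-/

open MeasureTheory ProbabilityTheory

/-- The stick percolation model: i.i.d. exponential(lam) spacings `X i` between the
seeds, i.i.d. stick lengths `S i` with law `μ`, the two families being mutually
independent. -/
structure StickModel {Ω : Type} [MeasurableSpace Ω] (P : Measure Ω)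
    (lam : ℝ) (μ : Measure ℝ) where
  X : ℕ → Ω → ℝ
  S : ℕ → Ω → ℝ
  measX : ∀ i, Measurable (X i)
  measS : ∀ i, Measurable (S i)
  distX : ∀ i, P.map (X i) = expMeasure lam
  distS : ∀ i, P.map (S i) = μ
  indep : iIndepFun (Sum.elim X S) P

/-- The `n`-th seed `x_n = X_0 + ⋯ + X_n`. -/
noncomputable def StickModel.seed {Ω : Type} [MeasurableSpace Ω] {P : Measure Ω}
    {lam : ℝ} {μ : Measure ℝ} (M : StickModel P lam μ) (n : ℕ) (ω : Ω) : ℝ :=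
  ∑ i ∈ Finset.range (n + 1), M.X i ω

/-- The percolation event: the union of the sticks `[x_n, x_n + S_n]` contains a
half-line `[a, ∞)`. -/
def StickModel.Percolates {Ω : Type} [MeasurableSpace Ω] {P : Measure Ω}
    {lam : ℝ} {μ : Measure ℝ} (M : StickModel P lam μ) (ω : Ω) : Prop :=
  ∃ a : ℝ, Set.Ici a ⊆ ⋃ n : ℕ, Set.Icc (M.seed n ω) (M.seed n ω + M.S n ω)

open Filter Set Real Asymptotics

theorem Ici_subset_iUnion_Icc_of_cover {x l a : ℕ → ℝ} (hx : Monotone x)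
    (ha : Tendsto a atTop atTop) {N : ℕ}
    (hcover : ∀ n > N, ∃ k < n, x n ≤ a n ∧ a n ≤ x k + l k) :
    Ici (x N) ⊆ ⋃ n, Icc (x n) (x n + l n) := by
  have hsegment : ∀ n > N, Icc (x N) (a n) ⊆ ⋃ n, Icc (x n) (x n + l n) := by
    intro n hn
    induction n, hn using Nat.le_induction with
    | base =>
      rintro y ⟨hNy, hya⟩
      obtain ⟨k, hk, -, hak⟩ := hcover (N + 1) (Nat.lt_succ_self N)
      exact mem_iUnion.2 ⟨k, (hx (Nat.le_of_lt_succ hk)).trans hNy, hya.trans hak⟩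
    | succ n hn ih =>
      rintro y ⟨hNy, hya⟩
      obtain ⟨k, hk, -, hak⟩ := hcover (n + 1) (Nat.lt_succ_of_lt hn)
      by_cases hky : x k ≤ y
      · exact mem_iUnion.2 ⟨k, hky, hya.trans hak⟩
      · obtain ⟨-, -, hxa, -⟩ := hcover n hn
        exact ih ⟨hNy, (not_le.1 hky).le.trans ((hx (Nat.le_of_lt_succ hk)).trans hxa)⟩
  intro y hy
  obtain ⟨n, hn, hyn⟩ := ((eventually_gt_atTop N).and (ha.eventually_ge_atTop y)).exists
  exact hsegment n hn ⟨hy, hyn⟩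

theorem summable_add_one_mul_exp_neg_mul_rpow {b p : ℝ} (hb : 0 < b) (hp : 0 < p) :
    Summable fun n : ℕ => ((n : ℝ) + 1) * exp (-(b * (n : ℝ) ^ p)) := by
  have hexp : (fun x : ℝ => exp (-(b * x ^ p))) =o[atTop] fun x => x ^ (-3 : ℝ) := by
    have := (isLittleO_exp_neg_mul_rpow_atTop hb (-3 / p)).comp_tendsto (tendsto_rpow_atTop hp)
    refine this.congr' (Eventually.of_forall fun x => by simp [neg_mul]) ?_
    filter_upwards [eventually_ge_atTop 0] with x hx
    simp only [Function.comp, ← rpow_mul hx]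
    field_simp
  have hlin : (fun x : ℝ => x + 1) =O[atTop] fun x => x := by
    refine IsBigO.of_bound 2 ?_
    filter_upwards [eventually_ge_atTop 1] with x hx
    rw [norm_of_nonneg (by linarith), norm_of_nonneg (by linarith)]
    linarith
  have hreal : (fun x : ℝ => (x + 1) * exp (-(b * x ^ p))) =O[atTop] fun x => x ^ (-2 : ℝ) := by
    refine (hlin.mul hexp.isBigO).congr' (Eventually.of_forall fun x => rfl) ?_
    filter_upwards [eventually_gt_atTop 0] with x hx
    rw [← rpow_one_add' hx.le (by norm_num)]
    norm_num
  exact summable_of_isBigO_nat (summable_nat_rpow.2 (by norm_num))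
    (hreal.comp_tendsto tendsto_natCast_atTop_atTop)

theorem measure_Iio_pow_le_exp_neg {μ : Measure ℝ} [IsProbabilityMeasure μ] {a ε : ℝ}
    (hε : ε ≤ (μ (Ioi a)).toReal) (n : ℕ) :
    μ (Iio a) ^ n ≤ ENNReal.ofReal (exp (-(n * ε))) := by
  have hIic : (μ (Iic a)).toReal = 1 - (μ (Ioi a)).toReal := by
    rw [← compl_Ioi, prob_compl_eq_one_sub measurableSet_Ioi,
      ENNReal.toReal_sub_of_le prob_le_one ENNReal.one_ne_top, ENNReal.toReal_one]
  have hle : (μ (Iio a)).toReal ≤ exp (-ε) := calc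
    (μ (Iio a)).toReal ≤ (μ (Iic a)).toReal :=
      ENNReal.toReal_mono (measure_ne_top _ _) (measure_mono Iio_subset_Iic_self)
    _ ≤ 1 - ε := by linarith
    _ ≤ exp (-ε) := one_sub_le_exp_neg ε
  rw [← ENNReal.ofReal_toReal (measure_ne_top μ (Iio a)),
    ← ENNReal.ofReal_pow ENNReal.toReal_nonneg, ← mul_neg, exp_nat_mul]
  exact ENNReal.ofReal_le_ofReal (pow_le_pow_left₀ ENNReal.toReal_nonneg hle n)

theorem MeasureTheory.ae_eventually_notMem_of_eventually_le_ofReal {α : Type*}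
    [MeasurableSpace α] {μ : Measure α} {s : ℕ → Set α} {f : ℕ → ℝ} (hf : Summable f)
    (hs : ∀ᶠ n in atTop, μ (s n) ≤ ENNReal.ofReal (f n)) :
    ∀ᵐ x ∂μ, ∀ᶠ n in atTop, x ∉ s n := by
  obtain ⟨N, hN⟩ := eventually_atTop.1 hs
  have hsum : ∑' n, μ (s (n + N)) ≠ ⊤ :=
    ne_top_of_le_ne_top ((summable_nat_add_iff N).2 hf).tsum_ofReal_ne_top
      (ENNReal.tsum_le_tsum fun n => hN _ (Nat.le_add_left N n))
  filter_upwards [ae_eventually_notMem hsum] with x hx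
  rw [← map_add_atTop_eq_nat N]
  exact hx

theorem ProbabilityTheory.iIndepFun.measure_biInter_preimage_eq_pow {Ω ι β : Type*}
    [MeasurableSpace Ω] [MeasurableSpace β] {P : Measure Ω} {f : ι → Ω → β}
    {ν : Measure β} (hf : iIndepFun f P) (hmeas : ∀ i, Measurable (f i)) (hlaw : ∀ i, P.map (f i) = ν)
    (s : Finset ι) {T : Set β} (hT : MeasurableSet T) :
    P (⋂ i ∈ s, f i ⁻¹' T) = ν T ^ s.card := by
  rw [hf.measure_inter_preimage_eq_mul s (fun _ _ => hT), ← Finset.prod_const]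
  refine Finset.prod_congr rfl fun i _ => ?_
  rw [← hlaw i, Measure.map_apply (hmeas i) hT]

theorem ProbabilityTheory.expMeasure_Ioi {r : ℝ} (hr : 0 < r) {u : ℝ} (hu : 0 ≤ u) :
    expMeasure r (Ioi u) = ENNReal.ofReal (exp (-(r * u))) := by
  have := isProbabilityMeasure_expMeasure hr
  rw [← compl_Iic, prob_compl_eq_one_sub measurableSet_Iic, ← ofReal_cdf,
    cdf_expMeasure_eq hr, if_pos hu, ← ENNReal.ofReal_one,
    ← ENNReal.ofReal_sub _ (sub_nonneg.2 (exp_le_one_iff.2 (neg_nonpos.2 (by positivity)))),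
    sub_sub_cancel]

theorem ProbabilityTheory.expMeasure_Iio_zero {r : ℝ} (hr : 0 < r) :
    expMeasure r (Iio 0) = 0 := by
  refine measure_mono_null Iio_subset_Iic_self ?_
  have := isProbabilityMeasure_expMeasure hr
  rw [← ofReal_cdf, cdf_expMeasure_eq hr, if_pos le_rfl]
  simp

namespace StickModel

variable {Ω : Type} [MeasurableSpace Ω] {P : Measure Ω} {lam : ℝ} {μ : Measure ℝ}
  (M : StickModel P lam μ)

theorem iIndepFun_S : iIndepFun M.S P :=
  (iIndepFun.precomp Sum.inr_injective M.indep :)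

theorem ae_X_nonneg (hlam : 0 < lam) : ∀ᵐ ω ∂P, ∀ i, 0 ≤ M.X i ω := by
  refine ae_all_iff.2 fun i => ?_
  have hneg : P (M.X i ⁻¹' Iio 0) = 0 := by
    rw [← Measure.map_apply (M.measX i) measurableSet_Iio, M.distX i, expMeasure_Iio_zero hlam]
  exact (measure_eq_zero_iff_ae_notMem.1 hneg).mono fun ω h => not_lt.1 h

theorem monotone_seed {ω : Ω} (h : ∀ i, 0 ≤ M.X i ω) : Monotone (M.seed · ω) :=
  monotone_nat_of_le_succ fun n => by
    simp only [seed, Finset.sum_range_succ _ (n + 1)]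
    exact le_add_of_nonneg_right (h _)

theorem seed_nonneg {ω : Ω} (h : ∀ i, 0 ≤ M.X i ω) (n : ℕ) : 0 ≤ M.seed n ω :=
  Finset.sum_nonneg fun i _ => h i

theorem ae_eventually_seed_le (hlam : 0 < lam) :
    ∀ᵐ ω ∂P, ∀ᶠ n : ℕ in atTop, M.seed n ω ≤ (n : ℝ) ^ (3 / 2 : ℝ) := by
  set t : ℕ → ℝ := fun n => (n : ℝ) ^ (1 / 2 : ℝ) / 2
  have hbound : ∀ n, P (⋃ i ∈ Finset.range (n + 1), M.X i ⁻¹' Ioi (t n)) ≤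
      ENNReal.ofReal (((n : ℝ) + 1) * exp (-(lam / 2 * (n : ℝ) ^ (1 / 2 : ℝ)))) := by
    intro n
    calc P (⋃ i ∈ Finset.range (n + 1), M.X i ⁻¹' Ioi (t n))
        ≤ ∑ i ∈ Finset.range (n + 1), P (M.X i ⁻¹' Ioi (t n)) :=
          measure_biUnion_finset_le _ _
      _ = ∑ i ∈ Finset.range (n + 1), ENNReal.ofReal (exp (-(lam * t n))) := by
        refine Finset.sum_congr rfl fun i _ => ?_
        rw [← Measure.map_apply (M.measX i) measurableSet_Ioi, M.distX i,
          expMeasure_Ioi hlam (by positivity)]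
      _ = _ := by
        have hrate : lam * t n = lam / 2 * (n : ℝ) ^ (1 / 2 : ℝ) := by
          simp only [t]
          ring
        rw [Finset.sum_const, Finset.card_range, nsmul_eq_mul, ENNReal.ofReal_mul (by positivity),
          hrate]
        norm_cast
  filter_upwards [ae_eventually_notMem_of_eventually_le_ofReal
    (summable_add_one_mul_exp_neg_mul_rpow (half_pos hlam) one_half_pos)
    (Eventually.of_forall hbound)] with ω hω
  filter_upwards [hω, eventually_ge_atTop 1] with n hn hn1
  simp only [mem_iUnion, mem_preimage, mem_Ioi, not_exists, not_lt] at hn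
  have hsplit : (n : ℝ) ^ (3 / 2 : ℝ) = n * (n : ℝ) ^ (1 / 2 : ℝ) := by
    rw [← rpow_one_add' (Nat.cast_nonneg n) (by norm_num)]
    norm_num
  have hn_one : (1 : ℝ) ≤ n := by exact_mod_cast hn1
  calc M.seed n ω ≤ ∑ i ∈ Finset.range (n + 1), t n :=
        Finset.sum_le_sum fun i hi => hn i hi
    _ = ((n : ℝ) + 1) * ((n : ℝ) ^ (1 / 2 : ℝ) / 2) := by simp [t]
    _ ≤ (n : ℝ) ^ (3 / 2 : ℝ) := by
      rw [hsplit]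
      nlinarith [rpow_nonneg (Nat.cast_nonneg n) (1 / 2 : ℝ)]

theorem ae_eventually_exists_S_ge [IsProbabilityMeasure μ] {c x₀ : ℝ} (hc : 0 < c)
    (htail : ∀ x : ℝ, x₀ ≤ x → c * x ^ (-(1 / 2) : ℝ) ≤ (μ (Ioi x)).toReal) :
    ∀ᵐ ω ∂P, ∀ᶠ n : ℕ in atTop, ∃ k < n, (n : ℝ) ^ (3 / 2 : ℝ) ≤ M.S k ω := by
  have hbound : ∀ᶠ n : ℕ in atTop,
      P (⋂ k ∈ Finset.range n, M.S k ⁻¹' Iio ((n : ℝ) ^ (3 / 2 : ℝ))) ≤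
        ENNReal.ofReal (((n : ℝ) + 1) * exp (-(c * (n : ℝ) ^ (1 / 4 : ℝ)))) := by
    filter_upwards [((tendsto_rpow_atTop (by norm_num : (0 : ℝ) < 3 / 2)).comp
      tendsto_natCast_atTop_atTop).eventually_ge_atTop x₀]
      with n (hn : x₀ ≤ (n : ℝ) ^ (3 / 2 : ℝ))
    rw [M.iIndepFun_S.measure_biInter_preimage_eq_pow M.measS M.distS _ measurableSet_Iio,
      Finset.card_range]
    refine (measure_Iio_pow_le_exp_neg (htail _ hn) n).trans (ENNReal.ofReal_le_ofReal ?_)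
    have hexponent : (n : ℝ) * (c * ((n : ℝ) ^ (3 / 2 : ℝ)) ^ (-(1 / 2) : ℝ)) =
        c * (n : ℝ) ^ (1 / 4 : ℝ) := by
      rw [← rpow_mul (Nat.cast_nonneg n), mul_left_comm,
        ← rpow_one_add' (Nat.cast_nonneg n) (by norm_num)]
      norm_num
    rw [hexponent]
    exact le_mul_of_one_le_left (exp_pos _).le (le_add_of_nonneg_left (Nat.cast_nonneg n))
  filter_upwards [ae_eventually_notMem_of_eventually_le_ofReal
    (summable_add_one_mul_exp_neg_mul_rpow hc (by norm_num)) hbound] with ω hω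
  filter_upwards [hω] with n hn
  simpa using hn

end StickModel

theorem stick_percolates_of_half_tail_general (μ : Measure ℝ) [IsProbabilityMeasure μ]
    (c : ℝ) (hc : 0 < c) (x₀ : ℝ)
    (htail : ∀ x : ℝ, x₀ ≤ x → c * x ^ (-(1 / 2) : ℝ) ≤ (μ (Set.Ioi x)).toReal) :
    ∀ (lam : ℝ), 0 < lam →
      ∀ {Ω : Type} [MeasurableSpace Ω] (P : Measure Ω) [IsProbabilityMeasure P]
        (M : StickModel P lam μ), P {ω | M.Percolates ω} = 1 := by
  intro lam hlam Ω _ P _ M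
  have hpercolates : ∀ᵐ ω ∂P, M.Percolates ω := by
    filter_upwards [M.ae_X_nonneg hlam, M.ae_eventually_seed_le hlam,
      M.ae_eventually_exists_S_ge hc htail] with ω hX hseed hS
    obtain ⟨N, hN⟩ := (hseed.and hS).exists_forall_of_atTop
    refine ⟨M.seed N ω, Ici_subset_iUnion_Icc_of_cover (M.monotone_seed hX)
      ((tendsto_rpow_atTop (by norm_num : (0 : ℝ) < 3 / 2)).comp tendsto_natCast_atTop_atTop)
      fun n hn => ?_⟩
    obtain ⟨hseed_le, k, hk, hSk⟩ := hN n hn.le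
    exact ⟨k, hk, hseed_le, hSk.trans (le_add_of_nonneg_left (M.seed_nonneg hX k))⟩
  rw [← one_le_prob_iff, ← measure_univ (μ := P)]
  exact measure_mono_ae (hpercolates.mono fun ω h _ => h)

/-- If the stick length distribution has a heavy tail of exponent `1/2`
(`R(x) ≥ c x^{-1/2}` for large `x`), then it is cluster-stable: for every intensity
`λ > 0` the system percolates with probability 1. -/
theorem stick_percolates_of_half_tail (μ : Measure ℝ) [IsProbabilityMeasure μ]
    (hμ : μ (Set.Ioi (0 : ℝ)) = 1) (c : ℝ) (hc : 0 < c) (x₀ : ℝ) (hx₀ : 0 ≤ x₀)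
    (htail : ∀ x : ℝ, x₀ ≤ x → c * x ^ (-(1 / 2) : ℝ) ≤ (μ (Set.Ioi x)).toReal) :
    ∀ (lam : ℝ), 0 < lam →
      ∀ {Ω : Type} [MeasurableSpace Ω] (P : Measure Ω) [IsProbabilityMeasure P]
        (M : StickModel P lam μ), P {ω | M.Percolates ω} = 1 :=
  stick_percolates_of_half_tail_general μ c hc x₀ htail
end

section
/- Monotonicity of stick percolation in the seed intensity: fix a probability measure μ on ℝ with μ((0,∞)) = 1, and for each intensity λ > 0 let P_λ(E) denote the probability of the percolation event in the stick percolation model with intensity λ and length distribution μ. If 0 < λ ≤ λ′ and P_λ(E) = 1, then P_{λ′}(E) = 1. -/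
/-!
Shrinking the spacings of the intensity-`lam` model by `c = lam / lam' ≤ 1`, while keeping
the stick lengths, gives a model of intensity `lam'` on the same space whose sticks
`[c x_n, c x_n + S_n]` contain the scaled sticks `c • [x_n, x_n + S_n]`; so it percolates
wherever the original one does. Independence makes the law of the family `(X, S)` the product
`Exp(lam')^ℕ ⊗ μ^ℕ`, so this transfers to any model of intensity `lam'`. Percolation itself
need not be measurable; it is replaced by the countable event that all large rationals are
covered. Both agree once the seeds diverge, which they do almost surely: the union of the
sticks is then locally finite, hence closed.
-/

open MeasureTheory ProbabilityTheory

open Filter Set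

lemma expMeasure_Iic {r : ℝ} (hr : 0 < r) (x : ℝ) :
    expMeasure r (Iic x) = ENNReal.ofReal (if 0 ≤ x then 1 - Real.exp (-(r * x)) else 0) := by
  have := isProbabilityMeasure_expMeasure hr
  rw [← ofReal_cdf, cdf_expMeasure_eq hr]

lemma expMeasure_Iic_lt_one {r : ℝ} (hr : 0 < r) (x : ℝ) : expMeasure r (Iic x) < 1 := by
  rw [expMeasure_Iic hr]
  split_ifs
  · exact ENNReal.ofReal_lt_one.2 (sub_lt_self 1 (Real.exp_pos _))
  · simp

lemma map_const_mul_expMeasure {r c : ℝ} (hr : 0 < r) (hc : 0 < c) :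
    (expMeasure r).map (c * ·) = expMeasure (r / c) := by
  have := isProbabilityMeasure_expMeasure hr
  have := isProbabilityMeasure_expMeasure (div_pos hr hc)
  refine Measure.ext_of_Iic _ _ fun x => ?_
  have hpre : (c * ·) ⁻¹' Iic x = Iic (x / c) := by
    ext y
    simp [le_div_iff₀ hc, mul_comm]
  rw [Measure.map_apply (measurable_const_mul c) measurableSet_Iic, hpre, expMeasure_Iic hr,
    expMeasure_Iic (div_pos hr hc)]
  simp only [le_div_iff₀ hc, zero_mul, mul_div_assoc', div_mul_eq_mul_div]

lemma tendsto_sum_range_succ_atTop {x : ℕ → ℝ} (hpos : ∀ i, 0 ≤ x i)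
    (hx : ¬BddAbove (range x)) :
    Tendsto (fun n => ∑ i ∈ Finset.range (n + 1), x i) atTop atTop := by
  refine tendsto_atTop_atTop_of_monotone (monotone_nat_of_le_succ fun n => ?_) fun b => ?_
  · rw [Finset.sum_range_succ _ (n + 1)]
    exact le_add_of_nonneg_right (hpos _)
  · obtain ⟨_, ⟨i, rfl⟩, hi⟩ := not_bddAbove_iff.1 hx b
    exact ⟨i, hi.le.trans
      (Finset.single_le_sum (fun j _ => hpos j) (Finset.self_mem_range_succ i))⟩

lemma locallyFinite_Icc_of_tendsto_atTop {x y : ℕ → ℝ} (hx : Tendsto x atTop atTop) :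
    LocallyFinite fun n => Icc (x n) (y n) := by
  intro t
  have hfar : ∀ᶠ n in cofinite, t + 1 ≤ x n := by
    rw [Nat.cofinite_eq_atTop]
    exact hx.eventually_ge_atTop (t + 1)
  refine ⟨Iio (t + 1), Iio_mem_nhds (lt_add_one t), (eventually_cofinite.1 hfar).subset ?_⟩
  rintro n ⟨s, hs, hst⟩
  exact not_le.2 (hs.1.trans_lt hst)

lemma Ici_subset_of_forall_rat_mem {C : Set ℝ} (hC : IsClosed C) {a : ℝ}
    (h : ∀ q : ℚ, a ≤ q → (q : ℝ) ∈ C) : Ici a ⊆ C := by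
  have hdense : Ioi a ⊆ closure (Ioi a ∩ range ((↑) : ℚ → ℝ)) :=
    Rat.denseRange_cast.open_subset_closure_inter isOpen_Ioi
  rw [← closure_Ioi]
  refine closure_minimal (hdense.trans (closure_minimal ?_ hC)) hC
  rintro _ ⟨ha, q, rfl⟩
  exact h q ha.le

lemma Ici_mul_subset_iUnion_Icc {x s : ℕ → ℝ} {a c : ℝ} (hc₀ : 0 < c) (hc₁ : c ≤ 1)
    (hs : ∀ n, 0 ≤ s n) (h : Ici a ⊆ ⋃ n, Icc (x n) (x n + s n)) :
    Ici (c * a) ⊆ ⋃ n, Icc (c * x n) (c * x n + s n) := by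
  intro y hy
  obtain ⟨n, hn⟩ := mem_iUnion.1 (h (show a ≤ y / c from (le_div_iff₀' hc₀).2 hy))
  refine mem_iUnion.2 ⟨n, (le_div_iff₀' hc₀).1 hn.1, ?_⟩
  calc y = c * (y / c) := (mul_div_cancel₀ y hc₀.ne').symm
    _ ≤ c * (x n + s n) := mul_le_mul_of_nonneg_left hn.2 hc₀.le
    _ ≤ c * x n + s n := by nlinarith [hs n]

/-- A configuration of the model: `f (.inl i)` is the spacing `X_i`, `f (.inr n)` the stick
length `S_n`. -/
abbrev StickConfig : Type := ℕ ⊕ ℕ → ℝ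

namespace StickConfig

noncomputable def seed (f : StickConfig) (n : ℕ) : ℝ :=
  ∑ i ∈ Finset.range (n + 1), f (.inl i)

def sticks (f : StickConfig) : Set ℝ :=
  ⋃ n, Icc (f.seed n) (f.seed n + f (.inr n))

def ratPercolates : Set StickConfig :=
  {f | ∃ a : ℕ, ∀ q : ℚ, (a : ℝ) ≤ q → (q : ℝ) ∈ f.sticks}

lemma measurableSet_ratPercolates : MeasurableSet ratPercolates := by
  have hseed (n : ℕ) : Measurable fun f : StickConfig => f.seed n :=
    Finset.measurable_sum _ fun i _ => measurable_pi_apply _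
  refine measurableSet_setOfPred.2 ?_
  simp only [sticks, mem_iUnion, mem_Icc]
  fun_prop

lemma mem_ratPercolates_of_Ici_subset {f : StickConfig} {a : ℝ} (h : Ici a ⊆ f.sticks) :
    f ∈ ratPercolates :=
  ⟨⌈a⌉₊, fun _ hq => h ((Nat.le_ceil a).trans hq)⟩

lemma exists_Ici_subset_of_mem_ratPercolates {f : StickConfig} (hf : f ∈ ratPercolates)
    (hseed : Tendsto f.seed atTop atTop) : ∃ a : ℝ, Ici a ⊆ f.sticks := by
  obtain ⟨a, ha⟩ := hf
  exact ⟨a, Ici_subset_of_forall_rat_mem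
    ((locallyFinite_Icc_of_tendsto_atTop hseed).isClosed_iUnion fun _ => isClosed_Icc) ha⟩

end StickConfig

noncomputable def stickLaw (lam : ℝ) (μ : Measure ℝ) : Measure StickConfig :=
  Measure.infinitePi (Sum.elim (fun _ => expMeasure lam) fun _ => μ)

namespace StickModel

variable {Ω : Type} [MeasurableSpace Ω] {P : Measure Ω} {lam : ℝ} {μ : Measure ℝ}

def config (M : StickModel P lam μ) (ω : Ω) : StickConfig :=
  fun j => Sum.elim M.X M.S j ω

lemma measurable_config (M : StickModel P lam μ) : Measurable M.config :=
  measurable_pi_lambda _ fun j => j.rec M.measX M.measS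

lemma map_config (M : StickModel P lam μ) : P.map M.config = stickLaw lam μ := by
  refine (M.indep.map_fun_eq_infinitePi_map fun j => j.rec M.measX M.measS).trans ?_
  congr with j : 1
  cases j
  exacts [M.distX _, M.distS _]

lemma measure_config_preimage (M : StickModel P lam μ) {A : Set StickConfig}
    (hA : MeasurableSet A) : P (M.config ⁻¹' A) = stickLaw lam μ A := by
  rw [← M.map_config, Measure.map_apply M.measurable_config hA]

lemma ae_nonneg_S [IsProbabilityMeasure μ] (hμ : μ (Ioi 0) = 1) (M : StickModel P lam μ) :
    ∀ᵐ ω ∂P, ∀ n, 0 ≤ M.S n ω := by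
  have hpos : ∀ᵐ x ∂μ, x ∈ Ioi 0 :=
    mem_ae_iff.2 ((prob_compl_eq_zero_iff measurableSet_Ioi).2 hμ)
  refine ae_all_iff.2 fun n => ae_of_ae_map (M.measS n).aemeasurable ?_
  rw [M.distS n]
  exact hpos.mono fun _ hx => le_of_lt hx

lemma ae_pos_X (hlam : 0 < lam) (M : StickModel P lam μ) :
    ∀ᵐ ω ∂P, ∀ i, 0 < M.X i ω := by
  refine ae_all_iff.2 fun i => ae_of_ae_map (M.measX i).aemeasurable ?_
  rw [M.distX i]
  exact mem_ae_iff.2 (by simp [compl_Ioi, expMeasure_Iic hlam] : expMeasure lam (Ioi 0)ᶜ = 0)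

lemma measure_forall_X_le (hlam : 0 < lam) (M : StickModel P lam μ) (m : ℝ) :
    P {ω | ∀ i, M.X i ω ≤ m} = 0 := by
  set p := expMeasure lam (Iic m)
  have hX : iIndepFun M.X P := M.indep.precomp (g := Sum.inl) Sum.inl_injective
  have hbound (n : ℕ) : P {ω | ∀ i, M.X i ω ≤ m} ≤ p ^ n := calc
    P {ω | ∀ i, M.X i ω ≤ m} ≤ P (⋂ i ∈ Finset.range n, M.X i ⁻¹' Iic m) :=
      measure_mono fun ω hω => mem_iInter₂.2 fun i _ => hω i
    _ = ∏ i ∈ Finset.range n, P (M.X i ⁻¹' Iic m) :=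
      hX.meas_biInter fun i _ => ⟨Iic m, measurableSet_Iic, rfl⟩
    _ = p ^ n := by
      simp [← Measure.map_apply (M.measX _) measurableSet_Iic, M.distX, p]
  exact le_antisymm (ge_of_tendsto' (ENNReal.tendsto_pow_atTop_nhds_zero_of_lt_one
    (expMeasure_Iic_lt_one hlam m)) hbound) zero_le

lemma ae_not_bddAbove_X (hlam : 0 < lam) (M : StickModel P lam μ) :
    ∀ᵐ ω ∂P, ¬BddAbove (range (M.X · ω)) := by
  refine ae_iff.2 (measure_mono_null (fun ω hω => ?_)
    (measure_iUnion_null fun m : ℕ => M.measure_forall_X_le hlam m))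
  obtain ⟨b, hb⟩ := not_not.1 hω
  obtain ⟨m, hm⟩ := exists_nat_ge b
  exact mem_iUnion.2 ⟨m, fun i => (hb ⟨i, rfl⟩).trans hm⟩

lemma ae_tendsto_seed (hlam : 0 < lam) (M : StickModel P lam μ) :
    ∀ᵐ ω ∂P, Tendsto (M.config ω).seed atTop atTop := by
  filter_upwards [M.ae_pos_X hlam, M.ae_not_bddAbove_X hlam] with ω hpos hunb
  exact tendsto_sum_range_succ_atTop (fun i => (hpos i).le) hunb

noncomputable def rescale (M : StickModel P lam μ) {lam' : ℝ} (hlam : 0 < lam)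
    (hlam' : 0 < lam') : StickModel P lam' μ where
  X i ω := lam / lam' * M.X i ω
  S := M.S
  measX i := (M.measX i).const_mul _
  measS := M.measS
  distX i := by
    have h := Measure.map_map (μ := P) (measurable_const_mul (lam / lam')) (M.measX i)
    rwa [M.distX i, map_const_mul_expMeasure hlam (div_pos hlam hlam'),
      div_div_cancel₀ hlam.ne', eq_comm] at h
  distS := M.distS
  indep := by
    convert M.indep.comp (g := Sum.elim (fun _ => (lam / lam' * ·)) fun _ => id)
      fun j => j.rec (fun _ => measurable_const_mul _) fun _ => measurable_id using 1
    ext j : 1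
    cases j <;> rfl

lemma seed_rescale (M : StickModel P lam μ) {lam' : ℝ} (hlam : 0 < lam) (hlam' : 0 < lam')
    (n : ℕ) (ω : Ω) : (M.rescale hlam hlam').seed n ω = lam / lam' * M.seed n ω :=
  (Finset.mul_sum _ _ _).symm

lemma percolates_rescale (M : StickModel P lam μ) {lam' : ℝ} (hlam : 0 < lam)
    (hle : lam ≤ lam') {ω : Ω} (hS : ∀ n, 0 ≤ M.S n ω) (h : M.Percolates ω) :
    (M.rescale hlam (hlam.trans_le hle)).Percolates ω := by
  obtain ⟨a, ha⟩ := h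
  have hlam' := hlam.trans_le hle
  refine ⟨lam / lam' * a, ?_⟩
  simp only [seed_rescale]
  exact Ici_mul_subset_iUnion_Icc (div_pos hlam hlam') ((div_le_one hlam').2 hle) hS ha

end StickModel

open StickConfig

/-- Monotonicity in the seed intensity: if the system with intensity `lam`
percolates with probability 1 and `lam ≤ lam'`, then the system with intensity
`lam'` (and the same length distribution) also percolates with probability 1. -/
theorem stick_percolation_mono_intensity (μ : Measure ℝ) [IsProbabilityMeasure μ]
    (hμ : μ (Set.Ioi (0 : ℝ)) = 1) (lam lam' : ℝ) (hlam : 0 < lam)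
    (hle : lam ≤ lam')
    {Ω : Type} [MeasurableSpace Ω] (P : Measure Ω) [IsProbabilityMeasure P]
    (M : StickModel P lam μ)
    {Ω' : Type} [MeasurableSpace Ω'] (P' : Measure Ω') [IsProbabilityMeasure P']
    (M' : StickModel P' lam' μ)
    (hperc : P {ω | M.Percolates ω} = 1) :
    P' {ω | M'.Percolates ω} = 1 := by
  have hlam' : 0 < lam' := hlam.trans_le hle
  have hcoupled : P ((M.rescale hlam hlam').config ⁻¹' ratPercolates) = 1 := by
    refine le_antisymm prob_le_one (hperc ▸ measure_mono_ae ?_)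
    filter_upwards [M.ae_nonneg_S hμ] with ω hS hω
    obtain ⟨a, ha⟩ := M.percolates_rescale hlam hle hS hω
    exact mem_ratPercolates_of_Ici_subset ha
  have hM' : P' (M'.config ⁻¹' ratPercolates) = 1 := by
    rwa [M'.measure_config_preimage measurableSet_ratPercolates,
      ← (M.rescale hlam hlam').measure_config_preimage measurableSet_ratPercolates]
  refine le_antisymm prob_le_one (hM' ▸ measure_mono_ae ?_)
  filter_upwards [M'.ae_tendsto_seed hlam'] with ω hseed hω
  exact exists_Ici_subset_of_mem_ratPercolates hω hseed
end
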